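/- arXiv:2602.23981 — 5 statements merged into one kernel-verified Lean document; each statement's English description precedes it below -/
import Mathlib

section
/- Let c>0, m≥1, k ∈ {1,…,m}, and let y=(y_t,y_s) be a point on the forward hyperboloid 𝕃^m_{-c}. Then the infimum, over all points p on 𝕃^m_{-c} whose k-th spatial coordinate is zero, of the geodesic distance (1/√c)·arcosh(−c·⟨y,p⟩_L) equals (1/√c)·arsinh(√c·|y_{s,k}|). -/
/-!
Write `a = ys k` and `u = √(1 + c a²)`. For `p` in the hyperplane, `⟨y, p⟩_L` only sees the
projection `y'` of `y` onto the hyperplane, which is timelike with `-c⟨y', y'⟩_L = u²`.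
The reverse Cauchy–Schwarz inequality for future timelike vectors then gives
`-c⟨y, p⟩_L ≥ u`, with equality at `p = y' / u`. Since `arcosh √(1 + t²) = arsinh |t|`,
the infimum is `(1/√c) arcosh u = (1/√c) arsinh (√c |a|)`.
-/

/-- The inverse hyperbolic cosine on `ℝ`: `arcosh x = log (x + √(x² - 1))`. -/
noncomputable def Real.arcosh' (x : ℝ) : ℝ := Real.log (x + Real.sqrt (x ^ 2 - 1))

open Finset

namespace Real

lemma arcosh'_sqrt_one_add_sq (t : ℝ) : arcosh' √(1 + t ^ 2) = arsinh |t| := by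
  rw [arcosh', arsinh, sq_sqrt (by positivity), add_sub_cancel_left, sqrt_sq_eq_abs, sq_abs,
    add_comm]

lemma arcosh'_le_arcosh' {x y : ℝ} (hx : 1 ≤ x) (hxy : x ≤ y) : arcosh' x ≤ arcosh' y := by
  unfold arcosh'
  have hpos : 0 < x + √(x ^ 2 - 1) := by positivity
  gcongr

end Real

/-- Reverse Cauchy–Schwarz for future timelike vectors `(xt, x)` and `(pt, p)`: it is the
Cauchy–Schwarz inequality for `(α, x)` and `(β, p)`, whose norms are `xt` and `pt`. -/
lemma Finset.mul_add_sum_mul_le_of_sq_add_sum_sq_eq {ι : Type*} (s : Finset ι) {x p : ι → ℝ}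
    {α β xt pt : ℝ} (hxt : 0 ≤ xt) (hpt : 0 ≤ pt)
    (hx : α ^ 2 + ∑ i ∈ s, x i ^ 2 = xt ^ 2) (hp : β ^ 2 + ∑ i ∈ s, p i ^ 2 = pt ^ 2) :
    α * β + ∑ i ∈ s, x i * p i ≤ xt * pt := by
  set A := √(∑ i ∈ s, x i ^ 2)
  set B := √(∑ i ∈ s, p i ^ 2)
  have hA : A ^ 2 = ∑ i ∈ s, x i ^ 2 := Real.sq_sqrt (by positivity)
  have hB : B ^ 2 = ∑ i ∈ s, p i ^ 2 := Real.sq_sqrt (by positivity)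
  have hCS : ∑ i ∈ s, x i * p i ≤ A * B := Real.sum_mul_le_sqrt_mul_sqrt s x p
  have h2 : α * β + A * B ≤ xt * pt := by
    refine le_of_abs_le (abs_le_of_sq_le_sq ?_ (mul_nonneg hxt hpt))
    nlinarith [sq_nonneg (α * B - β * A)]
  linarith

section

variable {ι : Type*} [Fintype ι] [DecidableEq ι] {c : ℝ} {k : ι} {yt : ℝ} {ys : ι → ℝ}

lemma sqrt_one_add_mul_sq_le_of_apply_eq_zero (hc : 0 < c)
    (hy : -yt ^ 2 + ∑ i, ys i ^ 2 = -(1 / c)) (hyt : 0 ≤ yt)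
    {pt : ℝ} {ps : ι → ℝ} (hp : -pt ^ 2 + ∑ i, ps i ^ 2 = -(1 / c)) (hpt : 0 ≤ pt)
    (hpk : ps k = 0) :
    √(1 + c * ys k ^ 2) ≤ -c * (-(yt * pt) + ∑ i, ys i * ps i) := by
  set u := √(1 + c * ys k ^ 2)
  have hu : u ^ 2 = 1 + c * ys k ^ 2 := Real.sq_sqrt (by positivity)
  have hsc : √c ^ 2 = c := Real.sq_sqrt hc.le
  have key := (univ.erase k).mul_add_sum_mul_le_of_sq_add_sum_sq_eq (x := ys) (p := ps)
    (α := u / √c) (β := 1 / √c) hyt hpt ?_ ?_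
  · rw [sum_erase univ (f := fun i => ys i * ps i) (by simp [hpk]), div_mul_div_comm, mul_one,
      ← sq, hsc] at key
    have : u / c ≤ yt * pt - ∑ i, ys i * ps i := by linarith
    rw [div_le_iff₀ hc] at this
    linarith
  · rw [div_pow, hu, hsc, sum_erase_eq_sub (mem_univ k)]
    field_simp at hy ⊢
    linarith
  · rw [sum_erase univ (f := fun i => ps i ^ 2) (by simp [hpk]), div_pow, hsc]
    linarith

lemma exists_apply_eq_zero_neg_mul_eq_sqrt (hc : 0 < c)
    (hy : -yt ^ 2 + ∑ i, ys i ^ 2 = -(1 / c)) (hyt : 0 < yt) :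
    ∃ pt : ℝ, ∃ ps : ι → ℝ, (-pt ^ 2 + ∑ i, ps i ^ 2 = -(1 / c)) ∧ 0 < pt ∧ ps k = 0 ∧
      -c * (-(yt * pt) + ∑ i, ys i * ps i) = √(1 + c * ys k ^ 2) := by
  set u := √(1 + c * ys k ^ 2)
  have hu : u ^ 2 = 1 + c * ys k ^ 2 := Real.sq_sqrt (by positivity)
  have hu0 : u ≠ 0 := by positivity
  have hS : ∑ i ∈ univ.erase k, ys i ^ 2 = yt ^ 2 - 1 / c - ys k ^ 2 := by
    rw [sum_erase_eq_sub (mem_univ k)]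
    linarith
  set ps := Function.update (fun i => ys i / u) k 0
  have hps : ∑ i, ps i ^ 2 = ∑ i ∈ univ.erase k, ys i ^ 2 / u ^ 2 := by
    simp [ps, Function.update_apply, sum_ite, filter_ne', div_pow]
  have hyps : ∑ i, ys i * ps i = ∑ i ∈ univ.erase k, ys i ^ 2 / u := by
    simp [ps, Function.update_apply, sum_ite, filter_ne', sq, mul_div_assoc]
  refine ⟨yt / u, ps, ?_, by positivity, Function.update_self _ _ _, ?_⟩
  · rw [hps, ← sum_div, hS, div_pow]
    field_simp
    linear_combination hu
  · rw [hyps, ← sum_div, hS]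
    field_simp
    linear_combination -hu

end

theorem dist_to_coordinate_hyperplane_general (c : ℝ) (hc : 0 < c) (m : ℕ)
    (k : Fin m) (yt : ℝ) (ys : Fin m → ℝ)
    (hy : -yt ^ 2 + ∑ i, (ys i) ^ 2 = -(1 / c)) (hyt : 0 < yt) :
    sInf {d : ℝ | ∃ pt : ℝ, ∃ ps : Fin m → ℝ,
        (-pt ^ 2 + ∑ i, (ps i) ^ 2 = -(1 / c)) ∧ 0 < pt ∧ ps k = 0 ∧
        d = (1 / Real.sqrt c) *
              Real.arcosh' (-c * (-(yt * pt) + ∑ i, ys i * ps i))}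
      = (1 / Real.sqrt c) * Real.arsinh (Real.sqrt c * |ys k|) := by
  have htarget : Real.arsinh (√c * |ys k|) = Real.arcosh' √(1 + c * ys k ^ 2) := by
    rw [← abs_of_nonneg (Real.sqrt_nonneg c), ← abs_mul, ← Real.arcosh'_sqrt_one_add_sq, mul_pow,
      Real.sq_sqrt hc.le]
  rw [htarget]
  refine IsLeast.csInf_eq ⟨?_, ?_⟩
  · obtain ⟨pt, ps, hp, hpt, hpk, hdist⟩ := exists_apply_eq_zero_neg_mul_eq_sqrt (k := k) hc hy hyt
    exact ⟨pt, ps, hp, hpt, hpk, by rw [hdist]⟩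
  · rintro d ⟨pt, ps, hp, hpt, hpk, rfl⟩
    gcongr
    exact Real.arcosh'_le_arcosh' (Real.one_le_sqrt.2 (by nlinarith [sq_nonneg (ys k)]))
      (sqrt_one_add_mul_sq_le_of_apply_eq_zero hc hy hyt.le hp hpt.le hpk)

/-- **Distance to a coordinate hyperplane in the Lorentz model.**
Let `c > 0`, `m ≥ 1`, `k ∈ {1,…,m}` and let `y = (yt, ys)` lie on the forward
hyperboloid `𝕃^m_{-c}`.  Then the infimum, over all points `p = (pt, ps)` of
`𝕃^m_{-c}` with `ps k = 0`, of the geodesic distance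
`(1/√c)·arcosh(-c·⟨y,p⟩_L)` equals `(1/√c)·arsinh(√c·|ys k|)`. -/
theorem dist_to_coordinate_hyperplane (c : ℝ) (hc : 0 < c) (m : ℕ) (hm : 1 ≤ m)
    (k : Fin m) (yt : ℝ) (ys : Fin m → ℝ)
    (hy : -yt ^ 2 + ∑ i, (ys i) ^ 2 = -(1 / c)) (hyt : 0 < yt) :
    sInf {d : ℝ | ∃ pt : ℝ, ∃ ps : Fin m → ℝ,
        (-pt ^ 2 + ∑ i, (ps i) ^ 2 = -(1 / c)) ∧ 0 < pt ∧ ps k = 0 ∧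
        d = (1 / Real.sqrt c) *
              Real.arcosh' (-c * (-(yt * pt) + ∑ i, ys i * ps i))}
      = (1 / Real.sqrt c) * Real.arsinh (Real.sqrt c * |ys k|) :=
  dist_to_coordinate_hyperplane_general c hc m k yt ys hy hyt
end

section
/- (Closed-form Lorentzian centroid.) Let c>0, let x_1,…,x_m be points on the forward hyperboloid 𝕃^n_{-c}, let ν_1,…,ν_m be nonnegative weights with ν_1+…+ν_m > 0, and set u = Σ_{i=1}^m ν_i x_i. Then the point μ = u / (√c·√(−⟨u,u⟩_L)) lies on 𝕃^n_{-c}, and μ minimizes the weighted sum of squared Lorentzian distances over 𝕃^n_{-c}: for every μ' ∈ 𝕃^n_{-c}, Σ_{i=1}^m ν_i·d_L²(x_i, μ) ≤ Σ_{i=1}^m ν_i·d_L²(x_i, μ'). -/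
/-!
For points of the forward hyperboloid, `d_L²(x, y) = -2/c - 2⟨x, y⟩_L`, so the weighted objective
equals `-(2/c) Σ ν_i - 2⟨u, μ⟩_L` and minimizing it means maximizing `⟨u, μ⟩_L`. The reversed
Cauchy–Schwarz inequality for future-directed timelike vectors,
`√(-⟨a,a⟩_L) √(-⟨b,b⟩_L) ≤ -⟨a,b⟩_L`, bounds `⟨u, μ⟩_L` by `-√(-⟨u,u⟩_L)/√c`, and the bound is
attained at `μ = u / (√c √(-⟨u,u⟩_L))`. The same inequality gives `⟨x_i, x_k⟩_L ≤ -1/c`, hence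
`⟨u, u⟩_L ≤ -(Σ ν_i)²/c < 0`, so `μ` is well defined.
-/

open Finset

section Lorentz

variable {ι κ : Type*} [Fintype ι] [Fintype κ]

def lorentzInner (a0 : ℝ) (a : ι → ℝ) (b0 : ℝ) (b : ι → ℝ) : ℝ :=
  -(a0 * b0) + ∑ j, a j * b j

lemma lorentzInner_comm (a0 : ℝ) (a : ι → ℝ) (b0 : ℝ) (b : ι → ℝ) :
    lorentzInner a0 a b0 b = lorentzInner b0 b a0 a := by
  simp only [lorentzInner, mul_comm]

lemma lorentzInner_self (a0 : ℝ) (a : ι → ℝ) :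
    lorentzInner a0 a a0 a = -a0 ^ 2 + ∑ j, a j ^ 2 := by
  simp only [lorentzInner, sq]

lemma lorentzInner_div_right (a0 : ℝ) (a : ι → ℝ) (b0 : ℝ) (b : ι → ℝ) (t : ℝ) :
    lorentzInner a0 a (b0 / t) (fun j => b j / t) = lorentzInner a0 a b0 b / t := by
  simp only [lorentzInner, mul_div_assoc', sum_div, neg_div, add_div]

lemma lorentzInner_eq_sum_of_eq_sum (ν x0 : κ → ℝ) (x : κ → ι → ℝ) {u0 : ℝ} {u : ι → ℝ}
    (hu0 : u0 = ∑ i, ν i * x0 i) (hu : ∀ j, u j = ∑ i, ν i * x i j) (b0 : ℝ) (b : ι → ℝ) :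
    lorentzInner u0 u b0 b = ∑ i, ν i * lorentzInner (x0 i) (x i) b0 b := by
  simp only [lorentzInner, hu0, hu, sum_mul, mul_add, sum_add_distrib, mul_sum]
  rw [sum_comm (γ := ι)]
  simp only [mul_neg, sum_neg_distrib, mul_assoc]

lemma neg_sq_sub_add_sum_sq_sub_eq (a0 : ℝ) (a : ι → ℝ) (b0 : ℝ) (b : ι → ℝ) :
    -(a0 - b0) ^ 2 + ∑ j, (a j - b j) ^ 2 =
      lorentzInner a0 a a0 a - 2 * lorentzInner a0 a b0 b + lorentzInner b0 b b0 b := by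
  rw [lorentzInner_self, lorentzInner_self, lorentzInner]
  simp only [sub_sq, sum_add_distrib, sum_sub_distrib, mul_assoc, ← mul_sum]
  ring

theorem sqrt_mul_sqrt_le_neg_lorentzInner {a0 b0 : ℝ} {a b : ι → ℝ} (ha0 : 0 ≤ a0)
    (hb0 : 0 ≤ b0) (ha : lorentzInner a0 a a0 a ≤ 0) (hb : lorentzInner b0 b b0 b ≤ 0) :
    √(-lorentzInner a0 a a0 a) * √(-lorentzInner b0 b b0 b) ≤ -lorentzInner a0 a b0 b := by
  set A := √(∑ j, a j ^ 2)
  set B := √(∑ j, b j ^ 2)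
  have hA : A ^ 2 = ∑ j, a j ^ 2 := Real.sq_sqrt (sum_nonneg fun j _ => sq_nonneg _)
  have hB : B ^ 2 = ∑ j, b j ^ 2 := Real.sq_sqrt (sum_nonneg fun j _ => sq_nonneg _)
  have hAa : A ≤ a0 := Real.sqrt_le_iff.2 ⟨ha0, by rw [lorentzInner_self] at ha; linarith⟩
  have hBb : B ≤ b0 := Real.sqrt_le_iff.2 ⟨hb0, by rw [lorentzInner_self] at hb; linarith⟩
  have hcs : ∑ j, a j * b j ≤ A * B := Real.sum_mul_le_sqrt_mul_sqrt _ a b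
  have hAB : A * B ≤ a0 * b0 := mul_le_mul hAa hBb (Real.sqrt_nonneg _) ha0
  calc √(-lorentzInner a0 a a0 a) * √(-lorentzInner b0 b b0 b)
      = √((a0 ^ 2 - A ^ 2) * (b0 ^ 2 - B ^ 2)) := by
        rw [← Real.sqrt_mul (by rw [lorentzInner_self] at ha ⊢; linarith), lorentzInner_self,
          lorentzInner_self, hA, hB]
        ring_nf
    _ ≤ a0 * b0 - A * B := by
        refine Real.sqrt_le_iff.2 ⟨by linarith, ?_⟩
        nlinarith [sq_nonneg (a0 * B - A * b0)]
    _ ≤ -lorentzInner a0 a b0 b := by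
        rw [lorentzInner]
        linarith

theorem one_div_le_neg_lorentzInner {c : ℝ} (hc : 0 < c) {x0 y0 : ℝ} {x y : ι → ℝ}
    (hx : lorentzInner x0 x x0 x = -(1 / c)) (hx0 : 0 ≤ x0)
    (hy : lorentzInner y0 y y0 y = -(1 / c)) (hy0 : 0 ≤ y0) :
    1 / c ≤ -lorentzInner x0 x y0 y := by
  have hc' : 0 ≤ 1 / c := by positivity
  have := sqrt_mul_sqrt_le_neg_lorentzInner hx0 hy0 (by rw [hx]; linarith) (by rw [hy]; linarith)
  rwa [hx, hy, neg_neg, Real.mul_self_sqrt hc'] at this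

theorem sq_sum_div_le_neg_lorentzInner_self {c : ℝ} (hc : 0 < c) (x0 : κ → ℝ) (x : κ → ι → ℝ)
    (hx : ∀ i, lorentzInner (x0 i) (x i) (x0 i) (x i) = -(1 / c)) (hx0 : ∀ i, 0 ≤ x0 i)
    (ν : κ → ℝ) (hν : ∀ i, 0 ≤ ν i) {u0 : ℝ} {u : ι → ℝ}
    (hu0 : u0 = ∑ i, ν i * x0 i) (hu : ∀ j, u j = ∑ i, ν i * x i j) :
    (∑ i, ν i) ^ 2 / c ≤ -lorentzInner u0 u u0 u := by
  have hpair : ∀ i k, 1 / c ≤ -lorentzInner (x0 k) (x k) (x0 i) (x i) := fun i k =>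
    one_div_le_neg_lorentzInner hc (hx k) (hx0 k) (hx i) (hx0 i)
  calc (∑ i, ν i) ^ 2 / c = ∑ i, ν i * ∑ k, ν k * (1 / c) := by
        rw [← sum_mul, ← sum_mul]
        ring
    _ ≤ ∑ i, ν i * ∑ k, ν k * -lorentzInner (x0 k) (x k) (x0 i) (x i) := by
        gcongr with i _ k _
        · exact hν i
        · exact hν k
        · exact hpair i k
    _ = -lorentzInner u0 u u0 u := by
        rw [lorentzInner_eq_sum_of_eq_sum ν x0 x hu0 hu, ← sum_neg_distrib]
        refine sum_congr rfl fun i _ => ?_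
        rw [lorentzInner_comm, lorentzInner_eq_sum_of_eq_sum ν x0 x hu0 hu]
        simp only [mul_neg, sum_neg_distrib]

theorem lorentzInner_self_div_sqrt {c : ℝ} (hc : 0 < c) {u0 D : ℝ} {u : ι → ℝ}
    (hu : lorentzInner u0 u u0 u < 0) (hD : D = √c * √(-lorentzInner u0 u u0 u)) :
    lorentzInner (u0 / D) (fun j => u j / D) (u0 / D) (fun j => u j / D) = -(1 / c) := by
  have hD2 : D ^ 2 = c * -lorentzInner u0 u u0 u := by
    rw [hD, mul_pow, Real.sq_sqrt hc.le, Real.sq_sqrt (by linarith)]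
  rw [lorentzInner_div_right, lorentzInner_comm, lorentzInner_div_right, div_div, ← sq, hD2]
  field_simp
  rw [div_self hu.ne]

theorem lorentzInner_div_sqrt {c : ℝ} (hc : 0 < c) {u0 D : ℝ} {u : ι → ℝ}
    (hu : lorentzInner u0 u u0 u < 0) (hD : D = √c * √(-lorentzInner u0 u u0 u)) :
    lorentzInner u0 u (u0 / D) (fun j => u j / D) = -(√(-lorentzInner u0 u u0 u) * √(1 / c)) := by
  have hQ := Real.mul_self_sqrt (neg_nonneg.2 hu.le)
  have hQ0 : 0 < √(-lorentzInner u0 u u0 u) := Real.sqrt_pos.2 (by linarith)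
  have hc0 : 0 < √c := Real.sqrt_pos.2 hc
  rw [lorentzInner_div_right, Real.sqrt_div' _ hc.le, Real.sqrt_one, hD]
  field_simp
  linarith

theorem sum_mul_sqDist_eq {c : ℝ} (x0 : κ → ℝ) (x : κ → ι → ℝ)
    (hx : ∀ i, lorentzInner (x0 i) (x i) (x0 i) (x i) = -(1 / c))
    (ν : κ → ℝ) {u0 : ℝ} {u : ι → ℝ}
    (hu0 : u0 = ∑ i, ν i * x0 i) (hu : ∀ j, u j = ∑ i, ν i * x i j)
    {y0 : ℝ} {y : ι → ℝ} (hy : lorentzInner y0 y y0 y = -(1 / c)) :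
    ∑ i, ν i * (-(x0 i - y0) ^ 2 + ∑ j, (x i j - y j) ^ 2) =
      -(2 / c) * ∑ i, ν i - 2 * lorentzInner u0 u y0 y := by
  simp only [neg_sq_sub_add_sum_sq_sub_eq, hx, hy, lorentzInner_eq_sum_of_eq_sum ν x0 x hu0 hu,
    mul_sum, ← sum_sub_distrib]
  exact sum_congr rfl fun i _ => by ring

end Lorentz

/-- **Closed-form Lorentzian centroid.**
Let `c > 0`, let `x_1, …, x_m` lie on the forward hyperboloid `𝕃^n_{-c}`,
let `ν_1, …, ν_m ≥ 0` with positive sum, and set `u = Σ_i ν_i x_i`.  Then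
`μ = u / (√c·√(-⟨u,u⟩_L))` lies on `𝕃^n_{-c}` and minimizes the weighted sum
of squared Lorentzian distances `Σ_i ν_i·d_L²(x_i, ·)` over `𝕃^n_{-c}`, where
`d_L²(x,y) = -(x₀-y₀)² + ‖x_s-y_s‖²`. -/
theorem lorentzian_centroid (c : ℝ) (hc : 0 < c) (n m : ℕ)
    (x0 : Fin m → ℝ) (xs : Fin m → Fin n → ℝ)
    (hx : ∀ i, -(x0 i) ^ 2 + ∑ j, (xs i j) ^ 2 = -(1 / c))
    (hx0 : ∀ i, 0 < x0 i)
    (ν : Fin m → ℝ) (hν : ∀ i, 0 ≤ ν i) (hνsum : 0 < ∑ i, ν i)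
    (u0 : ℝ) (us : Fin n → ℝ)
    (hu0 : u0 = ∑ i, ν i * x0 i) (hus : ∀ j, us j = ∑ i, ν i * xs i j)
    (μ0 : ℝ) (μs : Fin n → ℝ)
    (hμ0 : μ0 = u0 / (Real.sqrt c * Real.sqrt (-(-u0 ^ 2 + ∑ j, (us j) ^ 2))))
    (hμs : ∀ j, μs j =
      us j / (Real.sqrt c * Real.sqrt (-(-u0 ^ 2 + ∑ j, (us j) ^ 2)))) :
    ((-μ0 ^ 2 + ∑ j, (μs j) ^ 2 = -(1 / c)) ∧ 0 < μ0) ∧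
      ∀ μ0' : ℝ, ∀ μs' : Fin n → ℝ,
        (-μ0' ^ 2 + ∑ j, (μs' j) ^ 2 = -(1 / c)) → 0 < μ0' →
        (∑ i, ν i * (-(x0 i - μ0) ^ 2 + ∑ j, (xs i j - μs j) ^ 2))
          ≤ ∑ i, ν i * (-(x0 i - μ0') ^ 2 + ∑ j, (xs i j - μs' j) ^ 2) := by
  simp only [← lorentzInner_self] at hx hμ0 hμs
  obtain rfl : μs = fun j => us j / (√c * √(-lorentzInner u0 us u0 us)) := funext hμs
  subst hμ0
  have hu : lorentzInner u0 us u0 us < 0 := by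
    have := sq_sum_div_le_neg_lorentzInner_self hc x0 xs hx (fun i => (hx0 i).le) ν hν hu0 hus
    have : 0 < (∑ i, ν i) ^ 2 / c := by positivity
    linarith
  have hu0pos : 0 < u0 := by
    have hnonneg : 0 ≤ u0 := hu0 ▸ sum_nonneg fun i _ => mul_nonneg (hν i) (hx0 i).le
    rw [lorentzInner_self] at hu
    nlinarith [sum_nonneg fun j (_ : j ∈ univ) => sq_nonneg (us j)]
  have hμ := lorentzInner_self_div_sqrt hc hu rfl
  have hD : 0 < √c * √(-lorentzInner u0 us u0 us) :=
    mul_pos (Real.sqrt_pos.2 hc) (Real.sqrt_pos.2 (neg_pos.2 hu))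
  refine ⟨⟨by rwa [← lorentzInner_self], div_pos hu0pos hD⟩, fun μ0' μs' hμ' hμ0' => ?_⟩
  rw [← lorentzInner_self] at hμ'
  rw [sum_mul_sqDist_eq x0 xs hx ν hu0 hus hμ, sum_mul_sqDist_eq x0 xs hx ν hu0 hus hμ',
    lorentzInner_div_sqrt hc hu rfl]
  have hcs := sqrt_mul_sqrt_le_neg_lorentzInner hu0pos.le hμ0'.le hu.le
    (by rw [hμ']; exact neg_nonpos.2 (by positivity))
  rw [hμ', neg_neg] at hcs
  linarith
end

section
/- (Log-moment of the chi-squared distribution.) Let ν > 0 be a real number. Then ∫₀^∞ (log t) · t^{ν/2 − 1} e^{−t/2} / (2^{ν/2} Γ(ν/2)) dt = ψ(ν/2) + log 2, where Γ is the real Gamma function and ψ(s) denotes the digamma function, i.e. the derivative of s ↦ log Γ(s). Consequently, if ‖v‖ = σ√T with T chi-squared distributed with ν degrees of freedom, then E[log ‖v‖] = log σ + (1/2)(ψ(ν/2) + log 2). -/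
/-!
Differentiating the Gamma integral under the integral sign gives
`Γ'(a) = ∫₀^∞ log x · x^(a-1) e^(-x) dx`. Substituting `x ↦ r x` turns this into
`∫₀^∞ log x · x^(a-1) e^(-r x) dx = (Γ'(a) - log r · Γ(a)) / r^a`, so the log-moment of the
Gamma law of shape `a` and rate `r` is `ψ(a) - log r`. The chi-squared law with `ν` degrees of
freedom is the Gamma law of shape `ν/2` and rate `1/2`, and `log (σ √T) = log σ + ½ log T`.
-/

noncomputable def digamma (s : ℝ) : ℝ := deriv (fun x : ℝ => Real.log (Real.Gamma x)) s

open MeasureTheory Set ProbabilityTheory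

namespace Real

lemma abs_log_le_rpow_add_rpow_neg_div {x ε : ℝ} (hx : 0 < x) (hε : 0 < ε) :
    |log x| ≤ (x ^ ε + x ^ (-ε)) / ε := by
  have hpos : log x ≤ x ^ ε / ε := log_le_rpow_div hx.le hε
  have hneg : -log x ≤ x ^ (-ε) / ε := by
    simpa only [log_inv, inv_rpow hx.le, rpow_neg hx.le] using
      log_le_rpow_div (inv_pos.2 hx).le hε
  rw [add_div, abs_le]
  constructor <;> nlinarith [div_nonneg (rpow_nonneg hx.le ε) hε.le,
    div_nonneg (rpow_nonneg hx.le (-ε)) hε.le]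

lemma integrableOn_rpow_mul_exp_neg_mul {s r : ℝ} (hs : -1 < s) (hr : 0 < r) :
    IntegrableOn (fun x ↦ x ^ s * exp (-(r * x))) (Ioi 0) := by
  simpa only [rpow_one, neg_mul] using integrableOn_rpow_mul_exp_neg_mul_rpow hs one_pos hr

lemma integrableOn_log_mul_rpow_mul_exp_neg_mul {a r : ℝ} (ha : 0 < a) (hr : 0 < r) :
    IntegrableOn (fun x ↦ log x * (x ^ (a - 1) * exp (-(r * x)))) (Ioi 0) := by
  -- `|log x| ≤ (x^ε + x^(-ε)) / ε` with `ε = a / 2` keeps both exponents above `-1`.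
  refine (((integrableOn_rpow_mul_exp_neg_mul (by linarith : -1 < a - 1 + a / 2) hr).add
      (integrableOn_rpow_mul_exp_neg_mul (by linarith : -1 < a - 1 - a / 2) hr)).div_const
        (a / 2)).mono' ?_ ?_
  · exact (by fun_prop : Measurable fun x ↦ log x * (x ^ (a - 1) * exp (-(r * x))))
      |>.aestronglyMeasurable
  · refine (ae_restrict_iff' measurableSet_Ioi).2 (ae_of_all _ fun x (hx : 0 < x) ↦ ?_)
    rw [Pi.add_apply, norm_eq_abs, abs_mul,
      abs_of_nonneg (by positivity : 0 ≤ x ^ (a - 1) * exp (-(r * x))),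
      sub_eq_add_neg (a - 1), rpow_add hx, rpow_add hx]
    calc |log x| * (x ^ (a - 1) * exp (-(r * x)))
        ≤ (x ^ (a / 2) + x ^ (-(a / 2))) / (a / 2) * (x ^ (a - 1) * exp (-(r * x))) := by
          gcongr; exact abs_log_le_rpow_add_rpow_neg_div hx (by positivity)
      _ = _ := by ring

lemma hasDerivAt_Gamma_of_pos {s : ℝ} (hs : 0 < s) :
    HasDerivAt Gamma (∫ x in Ioi 0, log x * (x ^ (s - 1) * exp (-x))) s := by
  have hC := (Complex.hasDerivAt_GammaIntegral (s := s) (by simpa using hs)).real_of_complex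
  have hint : ∫ x : ℝ in Ioi 0, (x : ℂ) ^ ((s : ℂ) - 1) * (log x * exp (-x))
      = ((∫ x in Ioi 0, log x * (x ^ (s - 1) * exp (-x)) : ℝ) : ℂ) := by
    rw [← integral_complex_ofReal]
    refine setIntegral_congr_fun measurableSet_Ioi fun x (hx : 0 < x) ↦ ?_
    push_cast [Complex.ofReal_cpow hx.le]
    ring
  rw [hint, Complex.ofReal_re] at hC
  refine hC.congr_of_eventuallyEq ?_
  filter_upwards [Ioi_mem_nhds hs] with x (hx : 0 < x)
  rw [← Complex.Gamma_eq_integral (by simpa using hx), Complex.Gamma_ofReal, Complex.ofReal_re]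

lemma integral_log_mul_rpow_mul_exp_neg_mul {a r : ℝ} (ha : 0 < a) (hr : 0 < r) :
    ∫ x in Ioi 0, log x * (x ^ (a - 1) * exp (-(r * x))) =
      (deriv Gamma a - log r * Gamma a) / r ^ a := by
  let g : ℝ → ℝ := fun y ↦ log y * (y ^ (a - 1) * exp (-y))
  have hg_rescaled : EqOn (fun x ↦ g (r * x)) (fun x ↦ r ^ (a - 1) *
      (log r * (x ^ (a - 1) * exp (-(r * x))) + log x * (x ^ (a - 1) * exp (-(r * x)))))
      (Ioi 0) := fun x (hx : 0 < x) ↦ by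
    simp only [g]
    rw [log_mul hr.ne' hx.ne', mul_rpow hr.le hx.le]
    ring
  have hderiv : ∫ y in Ioi 0, g y = deriv Gamma a := (hasDerivAt_Gamma_of_pos ha).deriv.symm
  have hGamma : ∫ x in Ioi 0, x ^ (a - 1) * exp (-(r * x)) = Gamma a / r ^ a := by
    rw [integral_rpow_mul_exp_neg_mul_Ioi ha hr, one_div, inv_rpow hr.le, inv_mul_eq_div]
  have hsubst := integral_comp_mul_left_Ioi g 0 hr
  rw [mul_zero, hderiv, setIntegral_congr_fun measurableSet_Ioi hg_rescaled, integral_const_mul,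
    integral_add ((integrableOn_rpow_mul_exp_neg_mul (by linarith) hr).const_mul _)
      (integrableOn_log_mul_rpow_mul_exp_neg_mul ha hr),
    integral_const_mul, hGamma, smul_eq_mul, rpow_sub_one hr.ne'] at hsubst
  have hra : 0 < r ^ a := rpow_pos_of_pos hr a
  field_simp at hsubst ⊢
  linarith

end Real

lemma digamma_eq_deriv_Gamma_div_Gamma {s : ℝ} (hs : 0 < s) :
    digamma s = deriv Real.Gamma s / Real.Gamma s := by
  have h := Real.hasDerivAt_Gamma_of_pos hs
  rw [← h.deriv] at h
  exact (h.log (Real.Gamma_pos_of_pos hs).ne').deriv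

namespace ProbabilityTheory

open Real

variable {a r : ℝ}

lemma gammaPDFReal_of_pos {x : ℝ} (hx : 0 < x) :
    gammaPDFReal a r x = r ^ a / Gamma a * (x ^ (a - 1) * exp (-(r * x))) := by
  rw [gammaPDFReal, if_pos hx.le, mul_assoc]

lemma integrableOn_gammaPDFReal (ha : 0 < a) (hr : 0 < r) :
    IntegrableOn (gammaPDFReal a r) (Ioi 0) :=
  IntegrableOn.congr_fun ((integrableOn_rpow_mul_exp_neg_mul (by linarith) hr).const_mul _)
    (fun _ hx ↦ (gammaPDFReal_of_pos hx).symm) measurableSet_Ioi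

lemma setIntegral_gammaPDFReal_Ioi (ha : 0 < a) (hr : 0 < r) :
    ∫ x in Ioi 0, gammaPDFReal a r x = 1 := by
  rw [setIntegral_congr_fun measurableSet_Ioi fun _ hx ↦ gammaPDFReal_of_pos hx,
    integral_const_mul, integral_rpow_mul_exp_neg_mul_Ioi ha hr, one_div, inv_rpow hr.le]
  have := (Gamma_pos_of_pos ha).ne'
  have := (rpow_pos_of_pos hr a).ne'
  field_simp

lemma integrableOn_log_mul_gammaPDFReal (ha : 0 < a) (hr : 0 < r) :
    IntegrableOn (fun x ↦ log x * gammaPDFReal a r x) (Ioi 0) :=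
  IntegrableOn.congr_fun ((integrableOn_log_mul_rpow_mul_exp_neg_mul ha hr).const_mul _)
    (fun x hx ↦ by rw [gammaPDFReal_of_pos hx, mul_left_comm]) measurableSet_Ioi

lemma setIntegral_log_mul_gammaPDFReal_Ioi (ha : 0 < a) (hr : 0 < r) :
    ∫ x in Ioi 0, log x * gammaPDFReal a r x = digamma a - log r := by
  rw [setIntegral_congr_fun measurableSet_Ioi fun x hx ↦ by
      rw [gammaPDFReal_of_pos hx, mul_left_comm],
    integral_const_mul, integral_log_mul_rpow_mul_exp_neg_mul ha hr,
    digamma_eq_deriv_Gamma_div_Gamma ha]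
  have := (Gamma_pos_of_pos ha).ne'
  have := (rpow_pos_of_pos hr a).ne'
  field_simp

lemma gammaPDFReal_one_half {x : ℝ} (hx : 0 < x) :
    gammaPDFReal a (1 / 2) x = x ^ (a - 1) * exp (-x / 2) / (2 ^ a * Gamma a) := by
  rw [gammaPDFReal_of_pos hx, one_div, inv_rpow zero_le_two]
  field_simp

end ProbabilityTheory

/-- **Log-moment of the chi-squared distribution.**
For `ν > 0`, `∫₀^∞ (log t)·t^{ν/2-1}e^{-t/2}/(2^{ν/2}Γ(ν/2)) dt = ψ(ν/2) + log 2`,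
and consequently for `σ > 0`, the expectation of `log(σ·√T)` with `T ~ χ²_ν` is
`log σ + (1/2)(ψ(ν/2) + log 2)`. -/
theorem chi_squared_log_moment (ν : ℝ) (hν : 0 < ν) :
    (∫ t in Set.Ioi (0 : ℝ),
        Real.log t * (t ^ (ν / 2 - 1) * Real.exp (-t / 2) /
          (2 ^ (ν / 2) * Real.Gamma (ν / 2))))
      = digamma (ν / 2) + Real.log 2 ∧
    ∀ σ : ℝ, 0 < σ →
      (∫ t in Set.Ioi (0 : ℝ),
          Real.log (σ * Real.sqrt t) * (t ^ (ν / 2 - 1) * Real.exp (-t / 2) /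
            (2 ^ (ν / 2) * Real.Gamma (ν / 2))))
        = Real.log σ + (1 / 2) * (digamma (ν / 2) + Real.log 2) := by
  have hk : 0 < ν / 2 := by positivity
  have hchi (g : ℝ → ℝ) : ∫ t in Ioi 0, g t * (t ^ (ν / 2 - 1) * Real.exp (-t / 2) /
      (2 ^ (ν / 2) * Real.Gamma (ν / 2))) = ∫ t in Ioi 0, g t * gammaPDFReal (ν / 2) (1 / 2) t :=
    setIntegral_congr_fun measurableSet_Ioi fun t ht ↦ by rw [gammaPDFReal_one_half ht]
  have hlog : ∫ t in Ioi 0, Real.log t * gammaPDFReal (ν / 2) (1 / 2) t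
      = digamma (ν / 2) + Real.log 2 := by
    rw [setIntegral_log_mul_gammaPDFReal_Ioi hk one_half_pos, one_div, Real.log_inv,
      sub_neg_eq_add]
  refine ⟨(hchi Real.log).trans hlog, fun σ hσ ↦ ?_⟩
  have hsplit : EqOn (fun t ↦ Real.log (σ * √t) * gammaPDFReal (ν / 2) (1 / 2) t)
      (fun t ↦ Real.log σ * gammaPDFReal (ν / 2) (1 / 2) t
        + 1 / 2 * (Real.log t * gammaPDFReal (ν / 2) (1 / 2) t)) (Ioi 0) := fun t ht ↦ by
    dsimp only
    rw [Real.log_mul hσ.ne' (Real.sqrt_pos.2 ht).ne', Real.log_sqrt (le_of_lt ht)]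
    ring
  rw [hchi fun t ↦ Real.log (σ * √t), setIntegral_congr_fun measurableSet_Ioi hsplit,
    integral_add ((integrableOn_gammaPDFReal hk one_half_pos).const_mul _)
      ((integrableOn_log_mul_gammaPDFReal hk one_half_pos).const_mul _),
    integral_const_mul, integral_const_mul, setIntegral_gammaPDFReal_Ioi hk one_half_pos, hlog,
    mul_one]
end

section
/- (Log-radius alignment.) Let n > 0 and d > 0 be real numbers and σ > 0. Define the scale s = exp((ψ(n/2) − ψ(d/2))/2), where ψ is the digamma function. Then ∫₀^∞ log(s·σ·√t) · t^{d/2 − 1} e^{−t/2} / (2^{d/2} Γ(d/2)) dt = log σ + (1/2)(ψ(n/2) + log 2). In particular, the expected log-radius of a block with radius σ√T, T chi-squared with d degrees of freedom, after rescaling by s(n,d), depends only on σ and n and not on the block dimension d. -/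
open Set MeasureTheory Filter Asymptotics Topology

lemma hasDerivAt_Gamma_mul_digamma {a : ℝ} (ha : ∀ m : ℕ, a ≠ -m) :
    HasDerivAt Real.Gamma (Real.Gamma a * digamma a) a := by
  have hΓ := (Real.differentiableAt_Gamma ha).hasDerivAt
  have hlogΓ := (Real.hasDerivAt_log (Real.Gamma_ne_zero ha)).comp a hΓ
  have hdigamma : Real.Gamma a * digamma a = deriv Real.Gamma a := by
    rw [show digamma a = _ from hlogΓ.deriv]
    field_simp [Real.Gamma_ne_zero ha]
  rwa [hdigamma]

section Mellin

lemma ofReal_rpow_mul_eq_cpow_smul {t : ℝ} (ht : 0 < t) (x y : ℝ) :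
    (((t ^ (x - 1) * y : ℝ)) : ℂ) = (t : ℂ) ^ ((x : ℂ) - 1) • (y : ℂ) := by
  rw [smul_eq_mul, Complex.ofReal_mul, Complex.ofReal_cpow ht.le]
  push_cast
  ring

lemma mellin_ofReal (g : ℝ → ℝ) (x : ℝ) :
    mellin (fun t => (g t : ℂ)) x = ((∫ t in Ioi 0, t ^ (x - 1) * g t : ℝ) : ℂ) := by
  refine (setIntegral_congr_fun measurableSet_Ioi fun t ht => ?_).trans integral_ofReal
  exact (ofReal_rpow_mul_eq_cpow_smul ht x (g t)).symm

lemma MellinConvergent.integrableOn_ofReal {g : ℝ → ℝ} {x : ℝ}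
    (hg : MellinConvergent (fun t => (g t : ℂ)) x) :
    IntegrableOn (fun t => t ^ (x - 1) * g t) (Ioi 0) :=
  IntegrableOn.congr_fun hg.re (fun t ht => by
    simp only [← ofReal_rpow_mul_eq_cpow_smul ht, RCLike.re_to_complex, Complex.ofReal_re])
    measurableSet_Ioi

lemma log_smul_ofReal (g : ℝ → ℝ) :
    (fun t : ℝ => Real.log t • (g t : ℂ)) = fun t => ((Real.log t * g t : ℝ) : ℂ) := by
  ext t
  simp [Complex.real_smul]

end Mellin

section GammaIntegral

variable {a r : ℝ}

lemma isBigO_ofReal_exp_neg_mul_atTop (hr : 0 < r) (b : ℝ) :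
    (fun t : ℝ => (Real.exp (-(r * t)) : ℂ)) =O[atTop] (· ^ b) := by
  rw [← isBigO_norm_left]
  simp_rw [Complex.norm_real, isBigO_norm_left, ← neg_mul]
  exact (isLittleO_exp_neg_mul_rpow_atTop hr b).isBigO

lemma isBigO_ofReal_exp_neg_mul_nhdsGT_zero (r : ℝ) :
    (fun t : ℝ => (Real.exp (-(r * t)) : ℂ)) =O[𝓝[>] 0] (· ^ (-(0 : ℝ))) := by
  simp_rw [neg_zero, Real.rpow_zero]
  refine isBigO_const_of_tendsto (y := ((Real.exp (-(r * 0)) : ℝ) : ℂ)) ?_ (by simp)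
  exact (by fun_prop : Continuous fun t : ℝ => (Real.exp (-(r * t)) : ℂ)).continuousWithinAt

lemma integrableOn_rpow_mul_exp_neg_mul (ha : 0 < a) (hr : 0 < r) :
    IntegrableOn (fun t => t ^ (a - 1) * Real.exp (-(r * t))) (Ioi 0) :=
  (integrableOn_rpow_mul_exp_neg_mul_rpow (s := a - 1) (b := r) (by linarith) one_pos hr
    ).congr_fun (fun t _ => by simp) measurableSet_Ioi

lemma hasDerivAt_integral_rpow_mul_exp_neg_mul (ha : 0 < a) (hr : 0 < r) :
    IntegrableOn (fun t => t ^ (a - 1) * (Real.log t * Real.exp (-(r * t)))) (Ioi 0) ∧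
      HasDerivAt (fun x => ∫ t in Ioi 0, t ^ (x - 1) * Real.exp (-(r * t)))
        (∫ t in Ioi 0, t ^ (a - 1) * (Real.log t * Real.exp (-(r * t)))) a := by
  obtain ⟨hconv, hderiv⟩ := mellin_hasDerivAt_of_isBigO_rpow (E := ℂ) (s := a)
    ((by fun_prop : Continuous fun t : ℝ => (Real.exp (-(r * t)) : ℂ)).continuousOn
      |>.locallyIntegrableOn measurableSet_Ioi)
    (isBigO_ofReal_exp_neg_mul_atTop hr (-(a + 1))) (by simp)
    (isBigO_ofReal_exp_neg_mul_nhdsGT_zero r) (by simpa using ha)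
  rw [log_smul_ofReal] at hconv hderiv
  refine ⟨hconv.integrableOn_ofReal, ?_⟩
  simpa only [mellin_ofReal, Complex.ofReal_re] using hderiv.real_of_complex

theorem integral_rpow_mul_log_mul_exp_neg_mul (ha : 0 < a) (hr : 0 < r) :
    ∫ t in Ioi 0, t ^ (a - 1) * (Real.log t * Real.exp (-(r * t)))
      = (1 / r) ^ a * Real.Gamma a * (digamma a - Real.log r) := by
  have hpow := (Real.hasStrictDerivAt_const_rpow (one_div_pos.mpr hr) a).hasDerivAt
  have hΓ := hasDerivAt_Gamma_mul_digamma (a := a) fun m h => by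
    linarith [(Nat.cast_nonneg m : (0 : ℝ) ≤ m)]
  have hnear : (fun x => (1 / r) ^ x * Real.Gamma x)
      =ᶠ[𝓝 a] fun x => ∫ t in Ioi 0, t ^ (x - 1) * Real.exp (-(r * t)) := by
    filter_upwards [eventually_gt_nhds ha] with x hx
    exact (Real.integral_rpow_mul_exp_neg_mul_Ioi hx hr).symm
  refine ((hasDerivAt_integral_rpow_mul_exp_neg_mul ha hr).2.unique
    ((hpow.mul hΓ).congr_of_eventuallyEq hnear.symm)).trans ?_
  rw [one_div, Real.log_inv]
  ring

end GammaIntegral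

section ChiSquared

noncomputable def chiSquaredDensity (k t : ℝ) : ℝ :=
  t ^ (k / 2 - 1) * Real.exp (-t / 2) / (2 ^ (k / 2) * Real.Gamma (k / 2))

variable {k : ℝ}

lemma chiSquaredDensity_eq (k t : ℝ) :
    chiSquaredDensity k t = (2 ^ (k / 2) * Real.Gamma (k / 2))⁻¹ *
      (t ^ (k / 2 - 1) * Real.exp (-(2⁻¹ * t))) := by
  rw [chiSquaredDensity, show -t / 2 = -(2⁻¹ * t) by ring]
  ring

lemma log_mul_chiSquaredDensity_eq (k t : ℝ) :
    Real.log t * chiSquaredDensity k t = (2 ^ (k / 2) * Real.Gamma (k / 2))⁻¹ *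
      (t ^ (k / 2 - 1) * (Real.log t * Real.exp (-(2⁻¹ * t)))) := by
  rw [chiSquaredDensity_eq]
  ring

lemma integrableOn_chiSquaredDensity (hk : 0 < k) :
    IntegrableOn (chiSquaredDensity k) (Ioi 0) := by
  simp_rw [funext (chiSquaredDensity_eq k)]
  exact (integrableOn_rpow_mul_exp_neg_mul (half_pos hk) (by norm_num)).const_mul _

lemma integral_chiSquaredDensity (hk : 0 < k) :
    ∫ t in Ioi 0, chiSquaredDensity k t = 1 := by
  simp_rw [chiSquaredDensity_eq, integral_const_mul,
    Real.integral_rpow_mul_exp_neg_mul_Ioi (half_pos hk) (by norm_num : (0 : ℝ) < 2⁻¹),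
    one_div, inv_inv]
  exact inv_mul_cancel₀ (by positivity)

lemma integrableOn_log_mul_chiSquaredDensity (hk : 0 < k) :
    IntegrableOn (fun t => Real.log t * chiSquaredDensity k t) (Ioi 0) := by
  simp_rw [log_mul_chiSquaredDensity_eq]
  exact ((hasDerivAt_integral_rpow_mul_exp_neg_mul (half_pos hk) (by norm_num)).1).const_mul _

lemma integral_log_mul_chiSquaredDensity (hk : 0 < k) :
    ∫ t in Ioi 0, Real.log t * chiSquaredDensity k t = digamma (k / 2) + Real.log 2 := by
  simp_rw [log_mul_chiSquaredDensity_eq, integral_const_mul,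
    integral_rpow_mul_log_mul_exp_neg_mul (half_pos hk) (by norm_num : (0 : ℝ) < 2⁻¹),
    one_div, inv_inv, Real.log_inv, sub_neg_eq_add]
  rw [← mul_assoc, inv_mul_cancel₀ (by positivity), one_mul]

end ChiSquared

theorem log_radius_alignment_general (n d σ : ℝ) (hd : 0 < d) (hσ : 0 < σ)
    (s : ℝ) (hs : s = Real.exp ((digamma (n / 2) - digamma (d / 2)) / 2)) :
    (∫ t in Set.Ioi (0 : ℝ),
        Real.log (s * σ * Real.sqrt t) * (t ^ (d / 2 - 1) * Real.exp (-t / 2) /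
          (2 ^ (d / 2) * Real.Gamma (d / 2))))
      = Real.log σ + (1 / 2) * (digamma (n / 2) + Real.log 2) := by
  have hs₀ : s ≠ 0 := hs ▸ (Real.exp_pos _).ne'
  have hlog : EqOn (fun t => Real.log (s * σ * Real.sqrt t) * chiSquaredDensity d t)
      (fun t => (Real.log s + Real.log σ) * chiSquaredDensity d t
        + 2⁻¹ * (Real.log t * chiSquaredDensity d t)) (Ioi 0) := by
    intro t ht
    dsimp only
    rw [Real.log_mul (mul_ne_zero hs₀ hσ.ne') (Real.sqrt_pos.mpr ht).ne',
      Real.log_mul hs₀ hσ.ne', Real.log_sqrt (le_of_lt ht)]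
    ring
  change ∫ t in Ioi 0, Real.log (s * σ * Real.sqrt t) * chiSquaredDensity d t = _
  rw [setIntegral_congr_fun measurableSet_Ioi hlog,
    integral_add ((integrableOn_chiSquaredDensity hd).const_mul _)
      ((integrableOn_log_mul_chiSquaredDensity hd).const_mul _),
    integral_const_mul, integral_const_mul, integral_chiSquaredDensity hd,
    integral_log_mul_chiSquaredDensity hd, hs, Real.log_exp]
  ring

/-- **Log-radius alignment.**
Let `n, d, σ > 0` and set the scale `s = exp((ψ(n/2) - ψ(d/2))/2)`.  Then the
expected log-radius of a block with radius `σ·√T`, `T ~ χ²_d`, after rescaling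
by `s`, equals `log σ + (1/2)(ψ(n/2) + log 2)`; in particular it depends only
on `σ` and `n`, not on the block dimension `d`. -/
theorem log_radius_alignment (n d σ : ℝ) (hn : 0 < n) (hd : 0 < d) (hσ : 0 < σ)
    (s : ℝ) (hs : s = Real.exp ((digamma (n / 2) - digamma (d / 2)) / 2)) :
    (∫ t in Set.Ioi (0 : ℝ),
        Real.log (s * σ * Real.sqrt t) * (t ^ (d / 2 - 1) * Real.exp (-t / 2) /
          (2 ^ (d / 2) * Real.Gamma (d / 2))))
      = Real.log σ + (1 / 2) * (digamma (n / 2) + Real.log 2) :=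
  log_radius_alignment_general n d σ hd hσ s hs
end

section
/- (Parallel transport is a Minkowski isometry between tangent spaces.) Let c>0 and let x, y be points on the forward hyperboloid 𝕃^n_{-c}. Then the denominator 1/c − ⟨x,y⟩_L is strictly positive, so the parallel transport PT_{x→y}(v) = v + (⟨y,v⟩_L / (1/c − ⟨x,y⟩_L))·(x + y) is well defined for every v ∈ ℝ^{1+n}. Moreover: (i) if ⟨v,x⟩_L = 0 then ⟨PT_{x→y}(v), y⟩_L = 0 (tangent vectors at x are carried to tangent vectors at y); and (ii) for all v, w with ⟨v,x⟩_L = ⟨w,x⟩_L = 0, one has ⟨PT_{x→y}(v), PT_{x→y}(w)⟩_L = ⟨v,w⟩_L. -/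
/-- The Minkowski inner product on `ℝ × ℝ^n`:
`⟨(x₀,xs),(y₀,ys)⟩_L = -x₀y₀ + Σ_i xs_i ys_i`. -/
def mink {n : ℕ} (x y : ℝ × (Fin n → ℝ)) : ℝ :=
  -(x.1 * y.1) + ∑ i, x.2 i * y.2 i

lemma mink_comm {n : ℕ} (x y : ℝ × (Fin n → ℝ)) : mink x y = mink y x := by
  simp [mink, mul_comm]

lemma mink_add_left {n : ℕ} (v z w : ℝ × (Fin n → ℝ)) :
    mink (v + z) w = mink v w + mink z w := by
  simp [mink, add_mul, Finset.sum_add_distrib]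
  ring

lemma mink_smul_left {n : ℕ} (a : ℝ) (v w : ℝ × (Fin n → ℝ)) :
    mink (a • v) w = a * mink v w := by
  simp only [mink, Prod.smul_fst, Prod.smul_snd, Pi.smul_apply, smul_eq_mul, mul_add,
    Finset.mul_sum]
  ring_nf

lemma mink_add_right {n : ℕ} (v z w : ℝ × (Fin n → ℝ)) :
    mink w (v + z) = mink w v + mink w z := by
  rw [mink_comm, mink_add_left, mink_comm v w, mink_comm z w]

lemma mink_smul_right {n : ℕ} (a : ℝ) (v w : ℝ × (Fin n → ℝ)) :
    mink w (a • v) = a * mink w v := by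
  rw [mink_comm, mink_smul_left, mink_comm v w]

/-- **Parallel transport is a Minkowski isometry between tangent spaces.**
Let `c > 0` and let `x, y` lie on the forward hyperboloid `𝕃^n_{-c}`.  Then
`1/c - ⟨x,y⟩_L > 0`, so `PT_{x→y}(v) = v + (⟨y,v⟩_L / (1/c - ⟨x,y⟩_L))·(x+y)`
is well defined; it carries tangent vectors at `x` to tangent vectors at `y`,
and preserves the Minkowski inner product on the tangent space at `x`. -/
theorem parallel_transport_isometry (c : ℝ) (hc : 0 < c) (n : ℕ)
    (x y : ℝ × (Fin n → ℝ))
    (hx : mink x x = -(1 / c)) (hx0 : 0 < x.1)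
    (hy : mink y y = -(1 / c)) (hy0 : 0 < y.1) :
    0 < 1 / c - mink x y ∧
    (∀ v : ℝ × (Fin n → ℝ), mink v x = 0 →
      mink (v + (mink y v / (1 / c - mink x y)) • (x + y)) y = 0) ∧
    (∀ v w : ℝ × (Fin n → ℝ), mink v x = 0 → mink w x = 0 →
      mink (v + (mink y v / (1 / c - mink x y)) • (x + y))
           (w + (mink y w / (1 / c - mink x y)) • (x + y)) = mink v w) := by
  have hc' : 0 < 1 / c := by positivity
  set A : ℝ := ∑ i, x.2 i * x.2 i with hA
  set B : ℝ := ∑ i, y.2 i * y.2 i with hB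
  set S : ℝ := ∑ i, x.2 i * y.2 i with hS
  have hxx : x.1 * x.1 = 1 / c + A := by
    have := hx; simp [mink, ← hA] at this; rw [one_div]; linarith
  have hyy : y.1 * y.1 = 1 / c + B := by
    have := hy; simp [mink, ← hB] at this; rw [one_div]; linarith
  have hCS : S ^ 2 ≤ A * B := by
    calc S ^ 2 = (∑ i, x.2 i * y.2 i) ^ 2 := by rw [hS]
      _ ≤ (∑ i, x.2 i ^ 2) * (∑ i, y.2 i ^ 2) :=
        Finset.sum_mul_sq_le_sq_mul_sq _ _ _
      _ = A * B := by
          rw [hA, hB]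
          congr 1 <;> exact Finset.sum_congr rfl (fun i _ => by ring)
  have hP : 0 ≤ A + B - 2 * S := by
    have : (0:ℝ) ≤ ∑ i, (x.2 i - y.2 i) ^ 2 := Finset.sum_nonneg fun i _ => sq_nonneg _
    have he : ∑ i, (x.2 i - y.2 i) ^ 2 = A + B - 2 * S := by
      simp only [hA, hB, hS, Finset.mul_sum, ← Finset.sum_add_distrib,
        ← Finset.sum_sub_distrib]
      exact Finset.sum_congr rfl (fun i _ => by ring)
    linarith [he ▸ this]
  have hD : 0 < 1 / c - mink x y := by
    have hmxy : mink x y = -(x.1 * y.1) + S := by simp [mink, hS]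
    have ht : 0 < x.1 * y.1 := mul_pos hx0 hy0
    have htsq : (x.1 * y.1) * (x.1 * y.1) = (1 / c + A) * (1 / c + B) := by
      rw [show (x.1 * y.1) * (x.1 * y.1) = (x.1*x.1)*(y.1*y.1) by ring, hxx, hyy]
    rw [hmxy]
    nlinarith [sq_nonneg (x.1 * y.1 - (1/c + S)), sq_nonneg (x.1 * y.1 + (1/c + S)), mul_pos hc' hc']
  set D := 1 / c - mink x y with hDdef
  have hDne : D ≠ 0 := ne_of_gt hD
  refine ⟨hD, ?_, ?_⟩
  · intro v hv
    rw [mink_add_left, mink_smul_left, mink_add_left, hy, mink_comm v y,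
      show mink x y = 1 / c - D by rw [hDdef]; ring]
    field_simp
    ring
  · intro v w hv hw
    rw [mink_add_left, mink_add_right, mink_add_right, mink_smul_left,
      mink_smul_left, mink_smul_right, mink_smul_right]
    have h1 : mink v (x + y) = mink y v := by
      rw [mink_add_right, hv, mink_comm v y]; ring
    have h2 : mink (x + y) w = mink y w := by
      rw [mink_add_left, mink_comm x w, hw]; ring
    have h3 : mink (x + y) (x + y) = -(2 * D) := by
      rw [mink_add_left, mink_add_right, mink_add_right, hx, hy, mink_comm y x, hDdef]
      ring
    rw [h1, h2, h3]
    field_simp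
    ring
end
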